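/- Q ∈ K is invertible if and only if Q Q† = s + t ε satisfies s² − t² ≠ 0, i.e., (|q_r|² + |q_d|²)² ≠ (q_r q_d† + q_d q_r†)²; in that case Q⁻¹ = Q† (s − t ε)/(s² − t²). -/

import Mathlib

/-! Since `ε` is central with `ε² = 1`, the idempotents `(1 ± ε)/2` split `K` as `ℍ × ℍ`:
`(q_r, q_d) ↦ (q_r + q_d, q_r - q_d)` is injective and multiplicative. So `Q` is invertible iff
`q_r + q_d` and `q_r - q_d` are nonzero, and `s ± t = |q_r ± q_d|²` gives
`s² - t² = |q_r + q_d|² |q_r - q_d|²`. Under the splitting, `Q† (s - tε) / (s² - t²)` becomes the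
pair of quaternion inverses `((q_r + q_d)⁻¹, (q_r - q_d)⁻¹)`. -/

noncomputable section

/-- The algebra `K = ℍ ⊕ ℍε` of "dual" quaternions with `ε` central, `ε² = 1`,
modeled on pairs `(q_r, q_d)`. -/
def Kmul (x y : Quaternion ℝ × Quaternion ℝ) : Quaternion ℝ × Quaternion ℝ :=
  (x.1 * y.1 + x.2 * y.2, x.1 * y.2 + x.2 * y.1)

/-- Conjugation on `K`: quaternion conjugation on both components (`ε† = ε`). -/
def Kconj (x : Quaternion ℝ × Quaternion ℝ) : Quaternion ℝ × Quaternion ℝ :=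
  (star x.1, star x.2)

open Quaternion

def Ksplit (x : ℍ[ℝ] × ℍ[ℝ]) : ℍ[ℝ] × ℍ[ℝ] := (x.1 + x.2, x.1 - x.2)

lemma Ksplit_Kmul (x y : ℍ[ℝ] × ℍ[ℝ]) : Ksplit (Kmul x y) = Ksplit x * Ksplit y := by
  simp only [Ksplit, Kmul, Prod.mk_mul_mk, Prod.ext_iff]
  constructor <;> noncomm_ring

lemma Ksplit_Kconj (x : ℍ[ℝ] × ℍ[ℝ]) : Ksplit (Kconj x) = star (Ksplit x) := by
  simp [Ksplit, Kconj, Prod.ext_iff]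

lemma Ksplit_smul (c : ℝ) (x : ℍ[ℝ] × ℍ[ℝ]) : Ksplit (c • x) = c • Ksplit x := by
  simp [Ksplit, smul_add, smul_sub]

lemma Ksplit_injective : Function.Injective Ksplit := by
  have recover (x : ℍ[ℝ] × ℍ[ℝ]) :
      x = (2 : ℝ)⁻¹ • ((Ksplit x).1 + (Ksplit x).2, (Ksplit x).1 - (Ksplit x).2) := by
    ext1 <;> simp only [Ksplit, Prod.smul_mk] <;> module
  intro x y h
  rw [recover x, recover y, h]

lemma Kmul_eq_one_iff (x y : ℍ[ℝ] × ℍ[ℝ]) : Kmul x y = (1, 0) ↔ Ksplit x * Ksplit y = 1 := by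
  rw [← Ksplit_Kmul, ← Ksplit_injective.eq_iff]
  simp [Ksplit]

lemma normSq_add_eq (a b : ℍ[ℝ]) :
    normSq (a + b) = normSq a + normSq b + (a * star b + b * star a).re := by
  rw [normSq_add, two_mul, re_add, ← re_star (a * star b), star_mul, star_star]

lemma normSq_sub_eq (a b : ℍ[ℝ]) :
    normSq (a - b) = normSq a + normSq b - (a * star b + b * star a).re := by
  rw [sub_eq_add_neg, normSq_add_eq, normSq_neg, star_neg, mul_neg, neg_mul, ← neg_add, re_neg,
    ← sub_eq_add_neg]

lemma smul_star_mul_eq_inv {p : ℍ[ℝ]} {u v : ℝ} (hu : u = normSq p) (hv : v ≠ 0) :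
    (u * v)⁻¹ • (star p * (v : ℍ[ℝ])) = p⁻¹ := by
  rw [inv_def, mul_coe_eq_smul, smul_smul, mul_inv, inv_mul_cancel_right₀ hv, hu]

lemma Ksplit_smul_Kmul_Kconj_eq_inv (a b : ℍ[ℝ]) {s t : ℝ} (hp : normSq (a + b) = s + t)
    (hm : normSq (a - b) = s - t) (h : s ^ 2 - t ^ 2 ≠ 0) :
    Ksplit ((s ^ 2 - t ^ 2)⁻¹ • Kmul (Kconj (a, b)) ((s : ℍ[ℝ]), -(t : ℍ[ℝ]))) =
      ((a + b)⁻¹, (a - b)⁻¹) := by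
  have hfac : s ^ 2 - t ^ 2 = (s + t) * (s - t) := by ring
  have hcentral :
      Ksplit ((s : ℍ[ℝ]), -(t : ℍ[ℝ])) = (((s - t : ℝ) : ℍ[ℝ]), ((s + t : ℝ) : ℍ[ℝ])) := by
    simp [Ksplit, sub_eq_add_neg]
  rw [hfac] at h ⊢
  rw [Ksplit_smul, Ksplit_Kmul, Ksplit_Kconj, hcentral]
  ext1
  · exact smul_star_mul_eq_inv hp.symm (right_ne_zero_of_mul h)
  · rw [mul_comm (s + t)]
    exact smul_star_mul_eq_inv hm.symm (left_ne_zero_of_mul h)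

/-- Q ∈ K is invertible iff s² − t² ≠ 0, where QQ† = s + tε; in that case
Q⁻¹ = Q†(s − tε)/(s² − t²). -/
theorem K_invertible_iff (qr qd : Quaternion ℝ) :
    let Q : Quaternion ℝ × Quaternion ℝ := (qr, qd)
    let s : ℝ := Quaternion.normSq qr + Quaternion.normSq qd
    let t : ℝ := (qr * star qd + qd * star qr).re
    ((∃ R : Quaternion ℝ × Quaternion ℝ,
        Kmul Q R = (1, 0) ∧ Kmul R Q = (1, 0)) ↔ s ^ 2 - t ^ 2 ≠ 0) ∧
    (s ^ 2 - t ^ 2 ≠ 0 →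
      Kmul Q ((s ^ 2 - t ^ 2)⁻¹ • Kmul (Kconj Q) (((s : Quaternion ℝ)), -(t : Quaternion ℝ)))
        = (1, 0) ∧
      Kmul ((s ^ 2 - t ^ 2)⁻¹ • Kmul (Kconj Q) (((s : Quaternion ℝ)), -(t : Quaternion ℝ))) Q
        = (1, 0)) := by
  intro Q s t
  have hp : normSq (qr + qd) = s + t := normSq_add_eq qr qd
  have hm : normSq (qr - qd) = s - t := normSq_sub_eq qr qd
  have hst : s ^ 2 - t ^ 2 = normSq (qr + qd) * normSq (qr - qd) := by rw [hp, hm]; ring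
  have inverse (h : s ^ 2 - t ^ 2 ≠ 0) :
      Kmul Q ((s ^ 2 - t ^ 2)⁻¹ • Kmul (Kconj Q) ((s : ℍ[ℝ]), -(t : ℍ[ℝ]))) = (1, 0) ∧
      Kmul ((s ^ 2 - t ^ 2)⁻¹ • Kmul (Kconj Q) ((s : ℍ[ℝ]), -(t : ℍ[ℝ]))) Q = (1, 0) := by
    obtain ⟨hplus, hminus⟩ : qr + qd ≠ 0 ∧ qr - qd ≠ 0 := by
      simpa only [hst, mul_ne_zero_iff, normSq_ne_zero] using h
    rw [Kmul_eq_one_iff, Kmul_eq_one_iff, Ksplit_smul_Kmul_Kconj_eq_inv qr qd hp hm h]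
    exact ⟨Prod.ext (mul_inv_cancel₀ hplus) (mul_inv_cancel₀ hminus),
      Prod.ext (inv_mul_cancel₀ hplus) (inv_mul_cancel₀ hminus)⟩
  refine ⟨⟨?_, fun h => ⟨_, inverse h⟩⟩, inverse⟩
  rintro ⟨R, hQR, -⟩
  rw [Kmul_eq_one_iff] at hQR
  rw [hst]
  exact mul_ne_zero (normSq_ne_zero.2 (left_ne_zero_of_mul_eq_one (congrArg Prod.fst hQR)))
    (normSq_ne_zero.2 (left_ne_zero_of_mul_eq_one (congrArg Prod.snd hQR)))
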